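/- arXiv:2601.10260 — 5 statements merged into one kernel-verified Lean document; each statement's English description precedes it below -/
import Mathlib

section
/- Let A ∈ ℝ^{n×n} and T > 0. Suppose that for every pair λ, μ of complex eigenvalues of A and every nonzero integer ℓ, λ + μ ≠ (2ℓπ/T)·√(−1). Then the linear map F_T : ℝ^{n×n} → ℝ^{n×n}, B ↦ ∫₀^T e^{At} B e^{Aᵀt} dt, is injective. -/
open Matrix intervalIntegral

/-- Matrix exponential `e^{tA}` of a real matrix. -/
noncomputable def matExp {n : ℕ} (A : Matrix (Fin n) (Fin n) ℝ) (t : ℝ) :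
    Matrix (Fin n) (Fin n) ℝ :=
  NormedSpace.exp (t • A)

/-- Finite-horizon controllability Gramian `W̃(B;T) = ∫₀ᵀ e^{At} B e^{Aᵀt} dt`,
defined entrywise. -/
noncomputable def gramian {n : ℕ} (A B : Matrix (Fin n) (Fin n) ℝ) (T : ℝ) :
    Matrix (Fin n) (Fin n) ℝ :=
  fun i j => ∫ t in (0:ℝ)..T, (matExp A t * B * (matExp A t)ᵀ) i j

/-!
Let `M` be the complexification of `A` and `G` the complexified Gramian map. Since `e^{tM}`
commutes with `M`, `G` commutes with the Lyapunov operator `L C = M C + C Mᵀ`, so `ker G` is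
`L`-invariant; if it were nonzero it would contain an eigenvector `L C = ν C`. For such `C`,
`e^{tM} C e^{tMᵀ} = e^{νt} C`, hence `0 = G C = (∫₀ᵀ e^{νt} dt) C`, which forces
`ν = 2πil/T` with `l ≠ 0`. On the other hand `M C = C (ν - Mᵀ)` gives `p(ν - Mᵀ)` singular for
the characteristic polynomial `p` of `M` (as `C p(ν - Mᵀ) = p(M) C = 0`), so by spectral mapping
`M` and `ν - Mᵀ` share an eigenvalue, i.e. `ν = λ + μ` with `λ, μ` eigenvalues of `A`.
-/

open NormedSpace Polynomial

section Sylvester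

variable {ι K : Type*} [Fintype ι] [DecidableEq ι] [Field K] [IsAlgClosed K]

theorem Matrix.exists_mem_spectrum_of_mul_eq_mul {M N C : Matrix ι ι K} (hC : C ≠ 0)
    (h : M * C = C * N) : ∃ z ∈ spectrum K M, z ∈ spectrum K N := by
  have hι : Nonempty ι := by
    by_contra hι
    exact hC (Matrix.ext fun i => (hι ⟨i⟩).elim)
  have hpow (k : ℕ) : M ^ k * C = C * N ^ k := ((SemiconjBy.pow_right h.symm k).eq).symm
  have hcharpoly : C * aeval N M.charpoly = 0 := by
    have hsemi : aeval M M.charpoly * C = C * aeval N M.charpoly := by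
      simp only [aeval_eq_sum_range, Finset.sum_mul, Finset.mul_sum, smul_mul_assoc,
        mul_smul_comm, hpow]
    rw [← hsemi, aeval_self_charpoly, zero_mul]
  have hdeg : 0 < M.charpoly.degree := by
    rw [charpoly_degree_eq_dim]
    exact_mod_cast Fintype.card_pos
  have h0 : (0 : K) ∈ spectrum K (aeval N M.charpoly) :=
    (spectrum.zero_mem_iff K).mpr fun hu => hC (hu.mul_left_eq_zero.mp hcharpoly)
  rw [spectrum.map_polynomial_aeval_of_degree_pos _ _ hdeg] at h0
  obtain ⟨z, hzN, hz⟩ := h0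
  exact ⟨z, mem_spectrum_iff_isRoot_charpoly.mpr hz, hzN⟩

theorem Matrix.exists_add_eq_of_mul_add_mul_transpose_eq_smul {M C : Matrix ι ι K} {ν : K}
    (hC : C ≠ 0) (h : M * C + C * Mᵀ = ν • C) :
    ∃ lam ∈ spectrum K M, ∃ mu ∈ spectrum K M, lam + mu = ν := by
  have hMC : M * C = C * (algebraMap K _ ν - Mᵀ) := by
    rw [mul_sub, ← Algebra.commutes, ← Algebra.smul_def, ← h, add_sub_cancel_right]
  obtain ⟨z, hzM, hzN⟩ := exists_mem_spectrum_of_mul_eq_mul hC hMC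
  rw [← spectrum.singleton_sub_eq] at hzN
  obtain ⟨x, hx, w, hw, rfl⟩ := hzN
  refine ⟨x - w, hzM, w, ?_, by rw [sub_add_cancel, Set.mem_singleton_iff.mp hx]⟩
  rwa [mem_spectrum_iff_isRoot_charpoly, ← charpoly_transpose,
    ← mem_spectrum_iff_isRoot_charpoly]

end Sylvester

theorem exists_int_of_integral_cexp_eq_zero {ν : ℂ} {T : ℝ} (hT : T ≠ 0)
    (h : ∫ t in (0:ℝ)..T, Complex.exp (ν * t) = 0) :
    ∃ l : ℤ, l ≠ 0 ∧ ν = (2 * l * Real.pi / T : ℝ) * Complex.I := by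
  have hTc : (T : ℂ) ≠ 0 := Complex.ofReal_ne_zero.mpr hT
  have hν : ν ≠ 0 := by
    rintro rfl
    simp [hTc] at h
  rw [integral_exp_mul_complex hν, div_eq_zero_iff, Complex.ofReal_zero, mul_zero,
    Complex.exp_zero, sub_eq_zero, Complex.exp_eq_one_iff] at h
  obtain ⟨l, hl⟩ := h.resolve_right hν
  refine ⟨l, ?_, ?_⟩
  · rintro rfl
    simp [hν, hTc] at hl
  · rw [← eq_div_iff hTc] at hl
    rw [hl]
    push_cast
    ring

section Exponential

variable {ι : Type*} [Fintype ι] [DecidableEq ι]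

theorem Matrix.exp_smul_mul_mul_transpose_of_eigen {M C : Matrix ι ι ℂ} {ν : ℂ}
    (h : M * C + C * Mᵀ = ν • C) (z : ℂ) :
    exp (z • M) * C * (exp (z • M))ᵀ = Complex.exp (z * ν) • C := by
  have hsemi : SemiconjBy C (algebraMap ℂ _ (z * ν) + -(z • Mᵀ)) (z • M) := by
    rw [SemiconjBy, mul_add, ← Algebra.commutes, ← Algebra.smul_def, mul_neg, mul_smul_comm,
      smul_mul_assoc, eq_sub_of_add_eq h, smul_sub, smul_smul]
    abel
  have hexpC : exp (z • M) * C = C * exp (algebraMap ℂ _ (z * ν) + -(z • Mᵀ)) :=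
    open scoped Matrix.Norms.Operator in hsemi.exp_right.eq.symm
  have hexp : exp (algebraMap ℂ _ (z * ν) + -(z • Mᵀ)) =
      algebraMap ℂ _ (Complex.exp (z * ν)) * exp (-(z • Mᵀ)) := by
    rw [Matrix.exp_add_of_commute _ _ (Algebra.commute_algebraMap_left _ _),
      Complex.exp_eq_exp_ℂ]
    open scoped Matrix.Norms.Operator in rw [algebraMap_exp_comm]
    rfl
  rw [hexpC, hexp, ← transpose_smul, ← exp_transpose, transpose_smul,
    mul_assoc, mul_assoc, ← Matrix.exp_add_of_commute _ _ (Commute.refl (z • Mᵀ)).neg_left,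
    neg_add_cancel, exp_zero, mul_one, ← Algebra.commutes, ← Algebra.smul_def]

theorem Matrix.continuous_exp_smul_mul_mul_transpose (M C : Matrix ι ι ℂ) :
    Continuous fun t : ℝ => exp ((t : ℂ) • M) * C * (exp ((t : ℂ) • M))ᵀ := by
  have hexp : Continuous fun t : ℝ => exp ((t : ℂ) • M) := by
    open scoped Matrix.Norms.Operator in
    exact exp_continuous.comp (Complex.continuous_ofReal.smul continuous_const)
  exact (hexp.matrix_mul continuous_const).matrix_mul hexp.matrix_transpose

theorem map_ofReal_matExp {n : ℕ} (A : Matrix (Fin n) (Fin n) ℝ) (t : ℝ) :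
    (matExp A t).map Complex.ofReal = exp ((t : ℂ) • A.map Complex.ofReal) := by
  have hcont : Continuous (Complex.ofRealHom.mapMatrix : Matrix (Fin n) (Fin n) ℝ →+* _) :=
    continuous_id.matrix_map Complex.continuous_ofReal
  have hsmul : Complex.ofRealHom.mapMatrix (t • A) = (t : ℂ) • A.map Complex.ofReal := by
    ext i j
    simp
  rw [← hsmul]
  exact open scoped Matrix.Norms.Operator in map_exp _ hcont (t • A)

end Exponential

section EntrywiseIntegral

variable {𝕜 l m n : Type*} [RCLike 𝕜] [Fintype m]

noncomputable def Matrix.entrywiseIntegral (f : ℝ → Matrix l n 𝕜) (a b : ℝ) : Matrix l n 𝕜 :=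
  of fun i j => ∫ t in a..b, f t i j

theorem Matrix.entrywiseIntegral_apply (f : ℝ → Matrix l n 𝕜) (a b : ℝ) (i : l) (j : n) :
    entrywiseIntegral f a b i j = ∫ t in a..b, f t i j :=
  rfl

theorem Matrix.entrywiseIntegral_add {f g : ℝ → Matrix l n 𝕜} (hf : Continuous f)
    (hg : Continuous g) (a b : ℝ) :
    entrywiseIntegral (fun t => f t + g t) a b =
      entrywiseIntegral f a b + entrywiseIntegral g a b := by
  ext i j
  exact integral_add ((hf.matrix_elem i j).intervalIntegrable a b)
    ((hg.matrix_elem i j).intervalIntegrable a b)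

theorem Matrix.entrywiseIntegral_smul (c : 𝕜) (f : ℝ → Matrix l n 𝕜) (a b : ℝ) :
    entrywiseIntegral (fun t => c • f t) a b = c • entrywiseIntegral f a b := by
  ext i j
  exact integral_const_mul c _

theorem Matrix.entrywiseIntegral_smul_const (g : ℝ → 𝕜) (C : Matrix l n 𝕜) (a b : ℝ) :
    entrywiseIntegral (fun t => g t • C) a b = (∫ t in a..b, g t) • C := by
  ext i j
  exact integral_mul_const _ _

theorem Matrix.entrywiseIntegral_const_mul {f : ℝ → Matrix m n 𝕜} (hf : Continuous f)
    (P : Matrix l m 𝕜) (a b : ℝ) :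
    entrywiseIntegral (fun t => P * f t) a b = P * entrywiseIntegral f a b := by
  ext i j
  simp only [entrywiseIntegral_apply, mul_apply]
  rw [integral_finsetSum (f := fun k t => P i k * f t k j) fun k _ =>
    (continuous_const.mul (hf.matrix_elem k j)).intervalIntegrable a b]
  simp only [integral_const_mul]

theorem Matrix.entrywiseIntegral_mul_const {f : ℝ → Matrix l m 𝕜} (hf : Continuous f)
    (P : Matrix m n 𝕜) (a b : ℝ) :
    entrywiseIntegral (fun t => f t * P) a b = entrywiseIntegral f a b * P := by
  ext i j
  simp only [entrywiseIntegral_apply, mul_apply]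
  rw [integral_finsetSum (f := fun k t => f t i k * P k j) fun k _ =>
    ((hf.matrix_elem i k).mul continuous_const).intervalIntegrable a b]
  simp only [integral_mul_const]

end EntrywiseIntegral

section Gramian

variable {ι : Type*} [Fintype ι] [DecidableEq ι]

noncomputable def complexGramian (M : Matrix ι ι ℂ) (T : ℝ) :
    Matrix ι ι ℂ →ₗ[ℂ] Matrix ι ι ℂ where
  toFun C := entrywiseIntegral (fun t : ℝ => exp ((t : ℂ) • M) * C * (exp ((t : ℂ) • M))ᵀ) 0 T
  map_add' C C' := by
    simp only [mul_add, add_mul]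
    exact entrywiseIntegral_add (continuous_exp_smul_mul_mul_transpose M C)
      (continuous_exp_smul_mul_mul_transpose M C') 0 T
  map_smul' c C := by
    simp only [mul_smul_comm, smul_mul_assoc, RingHom.id_apply]
    exact entrywiseIntegral_smul c _ 0 T

theorem complexGramian_apply (M C : Matrix ι ι ℂ) (T : ℝ) :
    complexGramian M T C =
      entrywiseIntegral (fun t : ℝ => exp ((t : ℂ) • M) * C * (exp ((t : ℂ) • M))ᵀ) 0 T :=
  rfl

theorem complexGramian_mul_add_mul_transpose (M C : Matrix ι ι ℂ) (T : ℝ) :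
    complexGramian M T (M * C + C * Mᵀ) =
      M * complexGramian M T C + complexGramian M T C * Mᵀ := by
  have hexpand (t : ℝ) :
      exp ((t : ℂ) • M) * (M * C + C * Mᵀ) * (exp ((t : ℂ) • M))ᵀ =
        M * (exp ((t : ℂ) • M) * C * (exp ((t : ℂ) • M))ᵀ) +
          exp ((t : ℂ) • M) * C * (exp ((t : ℂ) • M))ᵀ * Mᵀ := by
    have hcomm : M * exp ((t : ℂ) • M) = exp ((t : ℂ) • M) * M :=
      ((Commute.refl M).smul_right _).exp_right.eq
    have hcommT : Mᵀ * (exp ((t : ℂ) • M))ᵀ = (exp ((t : ℂ) • M))ᵀ * Mᵀ := by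
      rw [← transpose_mul, ← hcomm, transpose_mul]
    simp only [mul_add, add_mul, mul_assoc]
    rw [← mul_assoc _ M, ← hcomm, hcommT, mul_assoc]
  have hcont := continuous_exp_smul_mul_mul_transpose M C
  simp only [complexGramian_apply, hexpand]
  rw [entrywiseIntegral_add (continuous_const.matrix_mul hcont)
      (hcont.matrix_mul continuous_const), entrywiseIntegral_const_mul hcont,
    entrywiseIntegral_mul_const hcont]

theorem complexGramian_eq_smul_of_eigen {M C : Matrix ι ι ℂ} {ν : ℂ} (h : M * C + C * Mᵀ = ν • C)
    (T : ℝ) : complexGramian M T C = (∫ t in (0:ℝ)..T, Complex.exp (ν * t)) • C := by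
  simp only [complexGramian_apply, exp_smul_mul_mul_transpose_of_eigen h, mul_comm _ ν]
  exact entrywiseIntegral_smul_const _ C 0 T

theorem map_ofReal_gramian {n : ℕ} (A B : Matrix (Fin n) (Fin n) ℝ) (T : ℝ) :
    (gramian A B T).map Complex.ofReal =
      complexGramian (A.map Complex.ofReal) T (B.map Complex.ofReal) := by
  ext i j
  simp only [map_apply, gramian, complexGramian_apply, entrywiseIntegral_apply,
    ← integral_ofReal]
  congr 1 with t
  rw [← map_ofReal_matExp, ← transpose_map]
  simp [mul_apply]

end Gramian

theorem complexGramian_injective {ι : Type*} [Fintype ι] [DecidableEq ι] (M : Matrix ι ι ℂ)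
    {T : ℝ} (hT : T ≠ 0)
    (heig : ∀ lam mu : ℂ, lam ∈ spectrum ℂ M → mu ∈ spectrum ℂ M →
      ∀ l : ℤ, l ≠ 0 → lam + mu ≠ (2 * l * Real.pi / T : ℝ) * Complex.I) :
    Function.Injective (complexGramian M T) := by
  let lyapunov : Module.End ℂ (Matrix ι ι ℂ) := LinearMap.mulLeft ℂ M + LinearMap.mulRight ℂ Mᵀ
  have hinv : ∀ C ∈ LinearMap.ker (complexGramian M T),
      lyapunov C ∈ LinearMap.ker (complexGramian M T) := by
    intro C hC
    rw [LinearMap.mem_ker] at hC ⊢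
    simp [lyapunov, complexGramian_mul_add_mul_transpose, hC]
  rw [← LinearMap.ker_eq_bot]
  by_contra hker
  have : Nontrivial (LinearMap.ker (complexGramian M T)) :=
    Submodule.nontrivial_iff_ne_bot.mpr hker
  obtain ⟨ν, hν⟩ := Module.End.exists_eigenvalue (lyapunov.restrict hinv)
  obtain ⟨⟨C, hCker⟩, hCeigen⟩ := hν.exists_hasEigenvector
  have hC : M * C + C * Mᵀ = ν • C := by
    simpa [lyapunov] using congrArg Subtype.val hCeigen.apply_eq_smul
  have hC0 : C ≠ 0 := fun h => hCeigen.2 (Subtype.ext h)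
  have hint : ∫ t in (0:ℝ)..T, Complex.exp (ν * t) = 0 := by
    rw [LinearMap.mem_ker, complexGramian_eq_smul_of_eigen hC] at hCker
    exact (smul_eq_zero.mp hCker).resolve_right hC0
  obtain ⟨l, hl, rfl⟩ := exists_int_of_integral_cexp_eq_zero hT hint
  obtain ⟨lam, hlam, mu, hmu, hsum⟩ := exists_add_eq_of_mul_add_mul_transpose_eq_smul hC0 hC
  exact heig lam mu hlam hmu l hl hsum

theorem stmt5 {n : ℕ} (A : Matrix (Fin n) (Fin n) ℝ) (T : ℝ) (hT : 0 < T)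
    (heig : ∀ lam mu : ℂ, lam ∈ spectrum ℂ (A.map Complex.ofReal) →
      mu ∈ spectrum ℂ (A.map Complex.ofReal) →
      ∀ l : ℤ, l ≠ 0 → lam + mu ≠ (2 * l * Real.pi / T : ℝ) * Complex.I) :
    Function.Injective (fun B : Matrix (Fin n) (Fin n) ℝ => gramian A B T) := by
  intro B B' h
  have hc := congrArg (Matrix.map · Complex.ofReal) h
  simp only [map_ofReal_gramian] at hc
  exact map_injective Complex.ofReal_injective (complexGramian_injective _ hT.ne' heig hc)
end

section
/- Let W₁,…,W_n ∈ ℂ^{N×N} be Hermitian positive semidefinite matrices that are linearly independent over ℝ, and for p ∈ ℝⁿ set W(p) = ∑_{i=1}^n p_i W_i. If the feasible set {p ∈ Δ : W(p) is positive definite} is nonempty, then the minimization problem: minimize −log det W(p) subject to p ∈ Δ and W(p) positive definite, admits a unique optimal solution. -/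
/-!
The objective is `-log det` composed with the linear map `p ↦ ∑ i, p i • W i`, which is injective
by linear independence. Since `log det` is strictly concave on positive definite matrices, the
objective is strictly convex on the convex feasible set, so it has at most one minimizer.
Strict concavity reduces, via the congruence `A = S * S`, `B = S * M * S`, to
`b * log det M < log det (a • 1 + b • M)` for `M ≠ 1`, which is the strict concavity of `log`
applied to the eigenvalues of `M`.
A minimizer exists because `det` attains its maximum on the compact simplex, and a maximizer has
determinant at least that of a feasible point, so it is itself feasible.
-/

open Matrix Function
open scoped ComplexOrder

namespace Real

lemma mul_log_le_log_add_mul {a b t : ℝ} (ha : 0 ≤ a) (hb : 0 ≤ b) (hab : a + b = 1)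
    (ht : 0 < t) : b * log t ≤ log (a + b * t) := by
  simpa using strictConcaveOn_log_Ioi.concaveOn.2 (Set.mem_Ioi.2 one_pos) (Set.mem_Ioi.2 ht)
    ha hb hab

lemma mul_log_lt_log_add_mul {a b t : ℝ} (ha : 0 < a) (hb : 0 < b) (hab : a + b = 1)
    (ht : 0 < t) (ht1 : t ≠ 1) : b * log t < log (a + b * t) := by
  simpa using strictConcaveOn_log_Ioi.2 (Set.mem_Ioi.2 one_pos) (Set.mem_Ioi.2 ht) ht1.symm
    ha hb hab

end Real

namespace Matrix

variable {𝕜 n : Type*} [RCLike 𝕜]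

lemma convex_setOf_posDef : Convex ℝ {A : Matrix n n 𝕜 | A.PosDef} :=
  convex_iff_forall_pos.2 fun _ hA _ hB _ _ ha hb _ => (hA.smul ha).add (hB.smul hb)

variable [Fintype n] [DecidableEq n]

open scoped MatrixOrder in
lemma PosDef.exists_posDef_mul_self_eq {A : Matrix n n 𝕜} (hA : A.PosDef) :
    ∃ S : Matrix n n 𝕜, S.PosDef ∧ S * S = A :=
  ⟨CFC.sqrt A, hA.isStrictlyPositive.sqrt.posDef, CFC.sqrt_mul_sqrt_self A hA.posSemidef.nonneg⟩

lemma PosSemidef.norm_det {A : Matrix n n 𝕜} (hA : A.PosSemidef) : ‖A.det‖ = RCLike.re A.det := by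
  simpa using congrArg RCLike.re (RCLike.norm_of_nonneg' hA.det_nonneg)

lemma IsHermitian.det_cfc {A : Matrix n n 𝕜} (hA : A.IsHermitian) (f : ℝ → ℝ) :
    (cfc f A).det = ∏ i, (f (hA.eigenvalues i) : 𝕜) := by
  rw [hA.cfc_eq]
  simp [IsHermitian.cfc, -Unitary.conjStarAlgAut_apply]

lemma IsHermitian.smul_one_add_smul_eq_cfc {M : Matrix n n 𝕜} (hM : M.IsHermitian) (a b : ℝ) :
    a • (1 : Matrix n n 𝕜) + b • M = cfc (fun x => a + b * x) M := by
  rw [cfc_add .., cfc_const_mul .., cfc_id' .., cfc_const a M, Algebra.algebraMap_eq_smul_one]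

lemma IsHermitian.eq_one_of_eigenvalues_eq_one {M : Matrix n n 𝕜} (hM : M.IsHermitian)
    (h : ∀ i, hM.eigenvalues i = 1) : M = 1 := by
  rw [← cfc_id' ℝ M, ← cfc_one ℝ M]
  refine cfc_congr fun x hx => ?_
  obtain ⟨i, rfl⟩ := hM.spectrum_real_eq_range_eigenvalues ▸ hx
  exact h i

lemma PosDef.re_det_pos {A : Matrix n n 𝕜} (hA : A.PosDef) : 0 < RCLike.re A.det :=
  hA.posSemidef.norm_det ▸ norm_pos_iff.2 hA.det_pos.ne'

lemma PosDef.norm_det_ne_zero {A : Matrix n n 𝕜} (hA : A.PosDef) : ‖A.det‖ ≠ 0 :=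
  norm_ne_zero_iff.2 hA.det_pos.ne'

lemma PosDef.mul_log_norm_det_lt {M : Matrix n n 𝕜} (hM : M.PosDef) (hM1 : M ≠ 1) {a b : ℝ}
    (ha : 0 < a) (hb : 0 < b) (hab : a + b = 1) :
    b * Real.log ‖M.det‖ < Real.log ‖(a • (1 : Matrix n n 𝕜) + b • M).det‖ := by
  set μ := hM.1.eigenvalues
  have hμ : ∀ i, 0 < μ i := hM.eigenvalues_pos
  have hdetM : ‖M.det‖ = ∏ i, μ i := by
    simp [hM.1.det_eq_prod_eigenvalues, norm_prod, abs_of_pos (hμ _), μ]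
  have hdet : ‖(a • (1 : Matrix n n 𝕜) + b • M).det‖ = ∏ i, (a + b * μ i) := by
    have hpos : ∀ i, 0 < a + b * μ i := fun i => by have := hμ i; positivity
    rw [hM.1.smul_one_add_smul_eq_cfc, hM.1.det_cfc, norm_prod]
    exact Finset.prod_congr rfl fun i _ => by rw [RCLike.norm_ofReal, abs_of_pos (hpos i)]
  obtain ⟨j, hj⟩ : ∃ j, μ j ≠ 1 := by
    by_contra! h
    exact hM1 (hM.1.eq_one_of_eigenvalues_eq_one h)
  rw [hdetM, hdet, Real.log_prod fun i _ => (hμ i).ne', Finset.mul_sum,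
    Real.log_prod fun i _ => by have := hμ i; positivity]
  exact Finset.sum_lt_sum
    (fun i _ => Real.mul_log_le_log_add_mul ha.le hb.le hab (hμ i))
    ⟨j, Finset.mem_univ j, Real.mul_log_lt_log_add_mul ha hb hab (hμ j) hj⟩

theorem strictConcaveOn_log_re_det :
    StrictConcaveOn ℝ {A : Matrix n n 𝕜 | A.PosDef} (fun A => Real.log (RCLike.re A.det)) := by
  refine ⟨convex_setOf_posDef, fun A hA B hB hAB a b ha hb hab => ?_⟩
  have hAB' : (a • A + b • B).PosDef := convex_setOf_posDef hA hB ha.le hb.le hab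
  simp only [smul_eq_mul, ← hA.posSemidef.norm_det, ← hB.posSemidef.norm_det,
    ← hAB'.posSemidef.norm_det]
  obtain ⟨S, hS, rfl⟩ := hA.exists_posDef_mul_self_eq
  have hSinv : (S⁻¹)ᴴ = S⁻¹ := hS.inv.1
  set M := S⁻¹ * B * S⁻¹
  have hM : M.PosDef := by
    simpa [hSinv] using hB.conjTranspose_mul_mul_same (mulVec_injective_of_isUnit hS.inv.isUnit)
  have hSMS : S * M * S = B := by
    have hSu := (isUnit_iff_isUnit_det S).1 hS.isUnit
    rw [← mul_assoc, ← mul_assoc, mul_nonsing_inv _ hSu, one_mul, mul_assoc,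
      nonsing_inv_mul _ hSu, mul_one]
  have hM1 : M ≠ 1 := fun h => hAB (by rw [← hSMS, h, mul_one])
  have hmid : a • (S * S) + b • B = S * (a • 1 + b • M) * S := by
    rw [← hSMS]; simp only [mul_add, add_mul, mul_smul_comm, smul_mul_assoc, mul_one]
  have hnorm : ∀ X, ‖(S * X * S).det‖ = ‖(S * S).det‖ * ‖X.det‖ := fun X => by
    simp only [det_mul, norm_mul]; ring
  have hX : (a • (1 : Matrix n n 𝕜) + b • M).PosDef := (PosDef.one.smul ha).add (hM.smul hb)
  rw [hmid, ← hSMS, hnorm, hnorm, Real.log_mul hA.norm_det_ne_zero hM.norm_det_ne_zero,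
    Real.log_mul hA.norm_det_ne_zero hX.norm_det_ne_zero]
  linear_combination (hM.mul_log_norm_det_lt hM1 ha hb hab) + Real.log ‖(S * S).det‖ * hab

end Matrix

lemma StrictConcaveOn.comp_linearMap_of_injective {𝕜 E F β : Type*} [Semiring 𝕜] [PartialOrder 𝕜]
    [AddCommMonoid E] [AddCommMonoid F] [AddCommMonoid β] [PartialOrder β] [Module 𝕜 E]
    [Module 𝕜 F] [SMul 𝕜 β] {f : F → β} {s : Set F} (hf : StrictConcaveOn 𝕜 s f) (g : E →ₗ[𝕜] F)
    (hg : Injective g) : StrictConcaveOn 𝕜 (g ⁻¹' s) (f ∘ g) :=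
  ⟨hf.1.linear_preimage g, fun x hx y hy hxy a b ha hb hab => by
    simpa using hf.2 hx hy (hg.ne hxy) ha hb hab⟩

section LogDetMaximization

variable {𝕜 ι n : Type*} [RCLike 𝕜] [Fintype ι]

def feasibleWeights (W : ι → Matrix n n 𝕜) : Set (ι → ℝ) :=
  {p | (∀ i, 0 ≤ p i) ∧ ∑ i, p i = 1 ∧ (∑ i, p i • W i).PosDef}

lemma convex_feasibleWeights (W : ι → Matrix n n 𝕜) : Convex ℝ (feasibleWeights W) := by
  have h : feasibleWeights W =
      stdSimplex ℝ ι ∩ Fintype.linearCombination ℝ W ⁻¹' {A | A.PosDef} :=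
    Set.ext fun _ => and_assoc.symm
  rw [h]
  exact (convex_stdSimplex ℝ ι).inter (convex_setOf_posDef.linear_preimage _)

variable [Fintype n] [DecidableEq n]

lemma strictConvexOn_neg_log_re_det {W : ι → Matrix n n 𝕜} (hW : LinearIndependent ℝ W) :
    StrictConvexOn ℝ (feasibleWeights W) fun p => -Real.log (RCLike.re (∑ i, p i • W i).det) :=
  (strictConcaveOn_log_re_det.comp_linearMap_of_injective _
    hW.fintypeLinearCombination_injective).neg.subset (fun _ hp => hp.2.2)
    (convex_feasibleWeights W)

lemma exists_isMinOn_neg_log_re_det {W : ι → Matrix n n 𝕜} (hW : ∀ i, (W i).PosSemidef)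
    (hne : (feasibleWeights W).Nonempty) :
    ∃ p ∈ feasibleWeights W,
      IsMinOn (fun p => -Real.log (RCLike.re (∑ i, p i • W i).det)) (feasibleWeights W) p := by
  obtain ⟨p₀, hp₀⟩ := hne
  have hcont : Continuous fun p : ι → ℝ => RCLike.re (∑ i, p i • W i).det := by fun_prop
  obtain ⟨p, hp, hmax⟩ := (isCompact_stdSimplex ℝ ι).exists_isMaxOn ⟨p₀, hp₀.1, hp₀.2.1⟩
    hcont.continuousOn
  have hdet : 0 < RCLike.re (∑ i, p i • W i).det :=
    hp₀.2.2.re_det_pos.trans_le (isMaxOn_iff.1 hmax p₀ ⟨hp₀.1, hp₀.2.1⟩)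
  have hPSD : (∑ i, p i • W i).PosSemidef := posSemidef_sum _ fun i _ => (hW i).smul (hp.1 i)
  have hPD : (∑ i, p i • W i).PosDef :=
    hPSD.posDef_iff_det_ne_zero.2 fun h => by simp [h] at hdet
  refine ⟨p, ⟨hp.1, hp.2, hPD⟩, isMinOn_iff.2 fun q hq => ?_⟩
  exact neg_le_neg (Real.log_le_log hq.2.2.re_det_pos (isMaxOn_iff.1 hmax q ⟨hq.1, hq.2.1⟩))

end LogDetMaximization

theorem stmt6 {n N : ℕ} (W : Fin n → Matrix (Fin N) (Fin N) ℂ)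
    (hpsd : ∀ i, (W i).PosSemidef)
    (hli : LinearIndependent ℝ W)
    (hfeas : ∃ p : Fin n → ℝ, (∀ i, 0 ≤ p i) ∧ ∑ i, p i = 1 ∧
      (∑ i, p i • W i).PosDef) :
    ∃! p : Fin n → ℝ,
      ((∀ i, 0 ≤ p i) ∧ ∑ i, p i = 1 ∧ (∑ i, p i • W i).PosDef) ∧
      ∀ q : Fin n → ℝ, ((∀ i, 0 ≤ q i) ∧ ∑ i, q i = 1 ∧ (∑ i, q i • W i).PosDef) →
        -Real.log (∑ i, p i • W i).det.re ≤ -Real.log (∑ i, q i • W i).det.re := by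
  obtain ⟨p, hp, hmin⟩ := exists_isMinOn_neg_log_re_det hpsd hfeas
  refine ⟨p, ⟨hp, isMinOn_iff.1 hmin⟩, fun q ⟨hq, hqmin⟩ => ?_⟩
  exact (strictConvexOn_neg_log_re_det hli).eq_of_isMinOn (isMinOn_iff.2 hqmin) hmin hq hp
end

section
/- Let C₁ ∈ ℂ^{n₁×n₁} have all eigenvalues with strictly negative real part, let C₂ ∈ ℂ^{n₂×n₂} have all eigenvalues with strictly positive real part, and let B ∈ ℂ^{n₁×n₂}. Then (∫₀^T e^{C₁t} B e^{C₂*t} dt) · e^{−C₂*T} → 0 (in any matrix norm, equivalently entrywise) as T → ∞. -/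
/-!
Since `e^{C₂ᴴ t} e^{-C₂ᴴ T} = e^{-C₂ᴴ (T - t)}`, the matrix in question is
`∫₀ᵀ e^{C₁ t} B e^{-C₂ᴴ (T - t)} dt`. Both `C₁` and `-C₂ᴴ` have their spectrum in the open left
half-plane, so both exponentials are `O(e^{-α t})` on `t ≥ 0` for some `α > 0`: on the generalized
eigenspace of an eigenvalue `μ`, `e^{t A} = e^{t μ} e^{t (A - μ)}` and the second factor is a
polynomial in `t`. Hence the integrand is `O(e^{-α T})` uniformly in `t ∈ [0, T]`, and the integral
is `O(T e^{-α T})`, which tends to `0`.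
-/

open Matrix Filter intervalIntegral

/-- Matrix exponential `e^{tC}` of a complex matrix. -/
noncomputable def cMatExp {k : ℕ} (C : Matrix (Fin k) (Fin k) ℂ) (t : ℝ) :
    Matrix (Fin k) (Fin k) ℂ :=
  NormedSpace.exp ((t : ℂ) • C)

open scoped Nat Topology
open Asymptotics Set

namespace Matrix

variable {ι : Type*} [Fintype ι] [DecidableEq ι]

theorem eventually_forall_mem_spectrum_re_lt_neg {A : Matrix ι ι ℂ}
    (h : ∀ μ ∈ spectrum ℂ A, μ.re < 0) :
    ∀ᶠ α in 𝓝[>] (0 : ℝ), ∀ μ ∈ spectrum ℂ A, μ.re < -α :=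
  (eventually_all_finite A.finite_spectrum).2 fun μ hμ =>
    ((continuous_neg.tendsto' (0 : ℝ) 0 neg_zero).eventually (lt_mem_nhds (h μ hμ))).filter_mono
      nhdsWithin_le_nhds

theorem re_lt_zero_of_mem_spectrum_neg_conjTranspose {C : Matrix ι ι ℂ}
    (h : ∀ μ ∈ spectrum ℂ C, 0 < μ.re) : ∀ μ ∈ spectrum ℂ (-Cᴴ), μ.re < 0 := by
  intro μ hμ
  rw [← spectrum.neg_eq, ← star_eq_conjTranspose, spectrum.map_star] at hμ
  simpa using h _ hμ

theorem of_intervalIntegral_mul_apply {l m n : Type*} [Fintype m] {f : ℝ → Matrix l m ℂ}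
    (hf : Continuous f) (M : Matrix m n ℂ) (a b : ℝ) (i : l) (j : n) :
    ((of fun p q => ∫ t in a..b, f t p q) * M) i j = ∫ t in a..b, (f t * M) i j := by
  simp only [mul_apply, of_apply, ← integral_mul_const]
  exact (integral_finsetSum fun q _ =>
    ((hf.matrix_elem i q).mul continuous_const).intervalIntegrable a b).symm

end Matrix

section OperatorNorm

open scoped Matrix.Norms.Operator

namespace Matrix

theorem norm_entry_le_linfty_opNorm {m n R : Type*} [Fintype m] [Fintype n] [SeminormedRing R]
    (A : Matrix m n R) (i : m) (j : n) : ‖A i j‖ ≤ ‖A‖ := by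
  have : ‖A i j‖₊ ≤ ‖A‖₊ := by
    rw [linfty_opNNNorm_def]
    exact (Finset.single_le_sum (fun _ _ => bot_le) (Finset.mem_univ j)).trans
      (Finset.le_sup (f := fun i => ∑ j, ‖A i j‖₊) (Finset.mem_univ i))
  exact_mod_cast this

theorem linfty_opNorm_le_sum_norm_mulVec_single {m n R : Type*} [Fintype m] [Fintype n]
    [DecidableEq n] [SeminormedRing R] (A : Matrix m n R) :
    ‖A‖ ≤ ∑ j, ‖A *ᵥ Pi.single j 1‖ := by
  have : ‖A‖₊ ≤ ∑ j, ‖A *ᵥ Pi.single j 1‖₊ := by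
    rw [linfty_opNNNorm_def]
    refine Finset.sup_le fun i _ => Finset.sum_le_sum fun j _ => ?_
    simpa [mulVec_single_one] using nnnorm_le_pi_nnnorm (A.col j) i
  simpa only [← coe_nnnorm, ← NNReal.coe_sum, NNReal.coe_le_coe] using this

theorem exp_smul_mulVec_eq_sum_of_pow_mulVec_eq_zero {ι : Type*} [Fintype ι] [DecidableEq ι]
    (N : Matrix ι ι ℂ) {x : ι → ℂ} {m : ℕ} (hx : N ^ m *ᵥ x = 0) (z : ℂ) :
    NormedSpace.exp (z • N) *ᵥ x = ∑ n ∈ Finset.range m, (z ^ n / n !) • (N ^ n *ᵥ x) := by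
  have hseries := (NormedSpace.exp_series_hasSum_exp' (𝕂 := ℂ) (z • N)).map
    (mulVec.addMonoidHomLeft x)
    (Continuous.matrix_mulVec (X := Matrix ι ι ℂ) continuous_id continuous_const)
  have hterm (n : ℕ) : ((n !⁻¹ : ℂ) • (z • N) ^ n) *ᵥ x = (z ^ n / n !) • (N ^ n *ᵥ x) := by
    rw [smul_pow, smul_smul, smul_mulVec, div_eq_inv_mul]
  have hfinite : HasSum (fun n : ℕ => (z ^ n / n !) • (N ^ n *ᵥ x))
      (∑ n ∈ Finset.range m, (z ^ n / n !) • (N ^ n *ᵥ x)) := by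
    refine hasSum_sum_of_ne_finset_zero fun n hn => ?_
    rw [← pow_sub_mul_pow N (not_lt.1 (Finset.mem_range.not.1 hn)), ← mulVec_mulVec, hx,
      mulVec_zero, smul_zero]
  exact hseries.unique (funext hterm ▸ hfinite)

end Matrix

section cMatExp

variable {k : ℕ}

theorem continuous_cMatExp (C : Matrix (Fin k) (Fin k) ℂ) : Continuous (cMatExp C) :=
  NormedSpace.exp_continuous.comp (Complex.continuous_ofReal.smul continuous_const)

theorem cMatExp_mul_cMatExp_neg (C : Matrix (Fin k) (Fin k) ℂ) (t T : ℝ) :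
    cMatExp C t * cMatExp (-C) T = cMatExp (-C) (T - t) := by
  have hcomm : Commute ((t : ℂ) • C) ((T : ℂ) • -C) :=
    ((Commute.refl C).neg_right.smul_right _).smul_left _
  rw [cMatExp, cMatExp, cMatExp, ← Matrix.exp_add_of_commute _ _ hcomm]
  congr 1
  push_cast
  module

theorem cMatExp_eq_smul_exp_sub_smul_one (A : Matrix (Fin k) (Fin k) ℂ) (μ : ℂ) (t : ℝ) :
    cMatExp A t = Complex.exp (t * μ) • NormedSpace.exp ((t : ℂ) • (A - μ • 1)) := by
  have hsplit : (t : ℂ) • A = algebraMap ℂ _ (t * μ) + (t : ℂ) • (A - μ • 1) := by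
    rw [Algebra.algebraMap_eq_smul_one]
    module
  have hscalar : NormedSpace.exp (algebraMap ℂ (Matrix (Fin k) (Fin k) ℂ) (t * μ)) =
      algebraMap ℂ _ (Complex.exp (t * μ)) := by
    rw [Complex.exp_eq_exp_ℂ]
    exact (NormedSpace.algebraMap_exp_comm _).symm
  rw [cMatExp, hsplit, Matrix.exp_add_of_commute _ _ (Algebra.commute_algebraMap_left _ _),
    hscalar, ← Algebra.smul_def]

variable {A : Matrix (Fin k) (Fin k) ℂ} {α : ℝ}

theorem isBigO_cMatExp_mulVec_of_mem_maxGenEigenspace {μ : ℂ} {x : Fin k → ℂ}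
    (hx : x ∈ Module.End.maxGenEigenspace (toLin' A) μ) (hμ : μ.re < -α) :
    (fun t => cMatExp A t *ᵥ x) =O[𝓟 (Ici 0)] fun t => Real.exp (-α * t) := by
  obtain ⟨m, hm⟩ := (Module.End.mem_maxGenEigenspace _ _ _).1 hx
  set N := A - μ • 1
  have hNm : N ^ m *ᵥ x = 0 := by
    rwa [show toLin' A - μ • 1 = toLin' N by simp [N, Module.End.one_eq_id], ← toLin'_pow,
      toLin'_apply] at hm
  set ε := -α - μ.re with hε_def
  have hε : 0 < ε := by linarith
  refine isBigO_principal.2 ⟨∑ n ∈ Finset.range m, ε⁻¹ ^ n * ‖N ^ n *ᵥ x‖, fun t ht => ?_⟩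
  rw [mem_Ici] at ht
  -- `(ε t)ⁿ / n! ≤ e^{ε t}`: the spectral gap `ε` absorbs the polynomial growth of `e^{t N} x`.
  have hterm (n : ℕ) : ‖((t : ℂ) ^ n / n !) • (N ^ n *ᵥ x)‖ ≤
      Real.exp (ε * t) * (ε⁻¹ ^ n * ‖N ^ n *ᵥ x‖) := by
    rw [norm_smul, norm_div, norm_pow, Complex.norm_real, Complex.norm_natCast,
      Real.norm_of_nonneg ht]
    calc t ^ n / n ! * ‖N ^ n *ᵥ x‖ = (ε * t) ^ n / n ! * (ε⁻¹ ^ n * ‖N ^ n *ᵥ x‖) := by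
          rw [mul_pow, inv_pow]
          field_simp
      _ ≤ _ := by gcongr; exact Real.pow_div_factorial_le_exp _ (by positivity) n
  calc ‖cMatExp A t *ᵥ x‖
      = Real.exp (t * μ.re) * ‖∑ n ∈ Finset.range m, ((t : ℂ) ^ n / n !) • (N ^ n *ᵥ x)‖ := by
        rw [cMatExp_eq_smul_exp_sub_smul_one A μ, smul_mulVec,
          exp_smul_mulVec_eq_sum_of_pow_mulVec_eq_zero N hNm, norm_smul, Complex.norm_exp]
        simp
    _ ≤ Real.exp (t * μ.re) *
          ∑ n ∈ Finset.range m, Real.exp (ε * t) * (ε⁻¹ ^ n * ‖N ^ n *ᵥ x‖) := by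
        gcongr
        exact (norm_sum_le _ _).trans (Finset.sum_le_sum fun n _ => hterm n)
    _ = (∑ n ∈ Finset.range m, ε⁻¹ ^ n * ‖N ^ n *ᵥ x‖) * ‖Real.exp (-α * t)‖ := by
        rw [← Finset.mul_sum, ← mul_assoc, ← Real.exp_add, Real.norm_of_nonneg (Real.exp_nonneg _),
          mul_comm, hε_def]
        ring_nf

theorem isBigO_cMatExp_mulVec (hA : ∀ μ ∈ spectrum ℂ A, μ.re < -α) (x : Fin k → ℂ) :
    (fun t => cMatExp A t *ᵥ x) =O[𝓟 (Ici 0)] fun t => Real.exp (-α * t) := by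
  have hx : x ∈ ⨆ μ, Module.End.maxGenEigenspace (toLin' A) μ := by
    rw [Module.End.iSup_maxGenEigenspace_eq_top]
    trivial
  induction hx using Submodule.iSup_induction' with
  | mem μ x hx =>
    rcases eq_or_ne x 0 with rfl | hx0
    · simp only [mulVec_zero]
      exact isBigO_zero _ _
    have hμ : μ ∈ spectrum ℂ A := by
      rw [← spectrum_toLin']
      exact ((Module.End.hasUnifEigenvalue_iff_hasUnifEigenvalue_one (by simp)).1
        ((Submodule.ne_bot_iff _).2 ⟨x, hx, hx0⟩)).mem_spectrum
    exact isBigO_cMatExp_mulVec_of_mem_maxGenEigenspace hx (hA μ hμ)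
  | zero =>
    simp only [mulVec_zero]
    exact isBigO_zero _ _
  | add x y _ _ hx hy => simpa [mulVec_add] using hx.add hy

theorem isBigO_cMatExp (hA : ∀ μ ∈ spectrum ℂ A, μ.re < -α) :
    cMatExp A =O[𝓟 (Ici 0)] fun t => Real.exp (-α * t) := by
  have hcolumns : (fun t => ∑ j, ‖cMatExp A t *ᵥ Pi.single j 1‖) =O[𝓟 (Ici 0)]
      fun t => Real.exp (-α * t) :=
    IsBigO.fun_sum fun j _ => (isBigO_cMatExp_mulVec hA (Pi.single j 1)).norm_left
  refine (isBigO_of_le _ fun t => ?_).trans hcolumns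
  rw [Real.norm_of_nonneg (Finset.sum_nonneg fun _ _ => norm_nonneg _)]
  exact linfty_opNorm_le_sum_norm_mulVec_single _

end cMatExp

theorem exists_norm_cMatExp_mul_mul_cMatExp_apply_le {k l : ℕ} {C : Matrix (Fin k) (Fin k) ℂ}
    {D : Matrix (Fin l) (Fin l) ℂ} {α : ℝ} (hC : ∀ μ ∈ spectrum ℂ C, μ.re < -α)
    (hD : ∀ μ ∈ spectrum ℂ D, μ.re < -α) (B : Matrix (Fin k) (Fin l) ℂ) :
    ∃ K, ∀ T t, 0 ≤ t → t ≤ T → ∀ i j,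
      ‖(cMatExp C t * B * cMatExp D (T - t)) i j‖ ≤ K * Real.exp (-α * T) := by
  obtain ⟨c₁, hc₁, hC⟩ := (isBigO_cMatExp hC).exists_pos
  obtain ⟨c₂, hc₂, hD⟩ := (isBigO_cMatExp hD).exists_pos
  rw [isBigOWith_principal] at hC hD
  refine ⟨c₁ * ‖B‖ * c₂, fun T t ht htT i j => ?_⟩
  calc ‖(cMatExp C t * B * cMatExp D (T - t)) i j‖
      ≤ ‖cMatExp C t‖ * ‖B‖ * ‖cMatExp D (T - t)‖ :=
        (norm_entry_le_linfty_opNorm _ i j).trans <| (linfty_opNorm_mul _ _).trans <|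
          mul_le_mul_of_nonneg_right (linfty_opNorm_mul _ _) (norm_nonneg _)
    _ ≤ c₁ * ‖Real.exp (-α * t)‖ * ‖B‖ * (c₂ * ‖Real.exp (-α * (T - t))‖) := by
        gcongr
        · exact hC t ht
        · exact hD (T - t) (sub_nonneg.2 htT)
    _ = c₁ * ‖B‖ * c₂ * Real.exp (-α * T) := by
        simp only [Real.norm_of_nonneg (Real.exp_nonneg _)]
        rw [show -α * T = -α * t + -α * (T - t) by ring, Real.exp_add]
        ring

end OperatorNorm

theorem tendsto_intervalIntegral_of_norm_le_mul_exp {E : Type*} [NormedAddCommGroup E]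
    [NormedSpace ℝ E] {F : ℝ → ℝ → E} {K α : ℝ} (hα : 0 < α)
    (hF : ∀ T t, 0 ≤ t → t ≤ T → ‖F T t‖ ≤ K * Real.exp (-α * T)) :
    Tendsto (fun T => ∫ t in (0 : ℝ)..T, F T t) atTop (𝓝 0) := by
  have hlim : Tendsto (fun T => K * (T ^ (1 : ℝ) * Real.exp (-α * T))) atTop (𝓝 0) := by
    simpa using (tendsto_rpow_mul_exp_neg_mul_atTop_nhds_zero 1 α hα).const_mul K
  refine squeeze_zero_norm' ?_ hlim
  filter_upwards [eventually_ge_atTop 0] with T hT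
  calc ‖∫ t in (0 : ℝ)..T, F T t‖ ≤ K * Real.exp (-α * T) * |T - 0| :=
        norm_integral_le_of_norm_le_const fun t ht => by
          rw [uIoc_of_le hT] at ht
          exact hF T t ht.1.le ht.2
    _ = K * (T ^ (1 : ℝ) * Real.exp (-α * T)) := by
        rw [sub_zero, abs_of_nonneg hT, Real.rpow_one]
        ring

theorem stmt12 {n₁ n₂ : ℕ}
    (C₁ : Matrix (Fin n₁) (Fin n₁) ℂ) (C₂ : Matrix (Fin n₂) (Fin n₂) ℂ)
    (B : Matrix (Fin n₁) (Fin n₂) ℂ)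
    (h₁ : ∀ mu ∈ spectrum ℂ C₁, mu.re < 0)
    (h₂ : ∀ mu ∈ spectrum ℂ C₂, 0 < mu.re) :
    ∀ i j, Filter.Tendsto
      (fun T : ℝ =>
        ((Matrix.of fun a b =>
            ∫ t in (0:ℝ)..T, (cMatExp C₁ t * B * cMatExp C₂ᴴ t) a b) *
          cMatExp (-C₂ᴴ) T) i j)
      Filter.atTop (nhds 0) := by
  intro i j
  obtain ⟨α, ⟨hα₁, hα₂⟩, hα⟩ := (((eventually_forall_mem_spectrum_re_lt_neg h₁).and
    (eventually_forall_mem_spectrum_re_lt_neg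
      (re_lt_zero_of_mem_spectrum_neg_conjTranspose h₂))).and self_mem_nhdsWithin).exists
  obtain ⟨K, hK⟩ := exists_norm_cMatExp_mul_mul_cMatExp_apply_le hα₁ hα₂ B
  have hcont : Continuous fun t => cMatExp C₁ t * B * cMatExp C₂ᴴ t :=
    ((continuous_cMatExp C₁).matrix_mul continuous_const).matrix_mul (continuous_cMatExp C₂ᴴ)
  refine (tendsto_intervalIntegral_of_norm_le_mul_exp (K := K) hα fun T t ht htT => ?_).congr
    fun T => (of_intervalIntegral_mul_apply hcont _ _ _ i j).symm
  rw [Matrix.mul_assoc _ (cMatExp C₂ᴴ t), cMatExp_mul_cMatExp_neg]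
  exact hK T t ht htT i j
end

section
/- Let λ ∈ ℂ with Re(λ) = 0, let k ≥ 1, let J = λI_k + N_k where N_k is the k×k nilpotent Jordan block with ones on the superdiagonal, and let D(T) = diag(T^{k−1/2}, T^{k−3/2}, …, T^{1/2}) for T > 0. Then D(T)⁻¹ e^{JT} → 0 as T → ∞. -/
open Matrix Filter

/-- The `k×k` nilpotent Jordan block with ones on the superdiagonal. -/
def nilpBlock (k : ℕ) : Matrix (Fin k) (Fin k) ℂ :=
  Matrix.of fun i j => if (i : ℕ) + 1 = (j : ℕ) then 1 else 0

/-- The scaling matrix `D(T) = diag(T^{k−1/2}, T^{k−3/2}, …, T^{1/2})`. -/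
noncomputable def scaleD (k : ℕ) (T : ℝ) : Matrix (Fin k) (Fin k) ℂ :=
  Matrix.diagonal fun a => ((T ^ ((k : ℝ) - (a : ℕ) - 1/2) : ℝ) : ℂ)

/-!
Since `λ • 1` commutes with `N_k`, `e^{JT} = e^{λT} e^{N_k T}` with `|e^{λT}| = 1`. As `N_k` is
nilpotent, the `(i, j)` entry of `e^{N_k T}` is `T^{j-i}/(j-i)!` for `i ≤ j` and `0` otherwise, so
the `(i, j)` entry of `D(T)⁻¹ e^{JT}` is bounded by `T^{-(k-i-1/2)} T^{j-i} = T^{-(k-j-1/2)}`,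
and `k - j - 1/2 > 0` because `j < k`.
-/

open NormedSpace Nat

lemma nilpBlock_pow_apply (k n : ℕ) (i j : Fin k) :
    (nilpBlock k ^ n) i j = if (i : ℕ) + n = j then 1 else 0 := by
  induction n generalizing j with
  | zero => simp [one_apply, Fin.ext_iff]
  | succ n ih =>
    rw [pow_succ, mul_apply]
    simp only [ih]
    simp only [nilpBlock, of_apply, ite_mul, one_mul, zero_mul]
    rw [Fin.sum_univ_eq_sum_range
      (fun x => if (i : ℕ) + n = x then if x + 1 = (j : ℕ) then (1 : ℂ) else 0 else 0),
      Finset.sum_ite_eq]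
    simp only [Finset.mem_range]
    have := j.isLt
    split_ifs <;> first | rfl | omega

section
-- `exp` does not depend on the norm; one is needed only to sum its series entrywise.
attribute [local instance] Matrix.linftyOpNormedRing Matrix.linftyOpNormedAlgebra

lemma exp_smul_nilpBlock_apply (k : ℕ) (t : ℂ) (i j : Fin k) :
    exp (t • nilpBlock k) i j = if (i : ℕ) ≤ j then t ^ ((j : ℕ) - i) / ((j : ℕ) - i)! else 0 := by
  have hterm (n : ℕ) : ((n !⁻¹ : ℂ) • (t • nilpBlock k) ^ n) i j
      = if (i : ℕ) + n = j then t ^ n / n ! else 0 := by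
    simp [smul_pow, nilpBlock_pow_apply, div_eq_inv_mul]
  have hs := Pi.hasSum.1 (Pi.hasSum.1 (exp_series_hasSum_exp' (𝕂 := ℂ) (t • nilpBlock k)) i) j
  refine hs.unique ?_
  simp only [hterm]
  split_ifs with hij
  · have hsub (n : ℕ) : (i : ℕ) + n = j ↔ n = j - i := by omega
    convert hasSum_single ((j : ℕ) - i) fun n hn => ?_ using 1
    · simp [hsub]
    · simp [hsub, hn]
  · have hne (n : ℕ) : (i : ℕ) + n ≠ j := by omega
    simpa only [hne, if_false] using hasSum_zero

end

lemma cMatExp_smul_one_add {k : ℕ} (lam : ℂ) (C : Matrix (Fin k) (Fin k) ℂ) (t : ℝ) :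
    cMatExp (lam • 1 + C) t = Complex.exp (t * lam) • cMatExp C t := by
  have hcomm : Commute (((t : ℂ) * lam) • (1 : Matrix (Fin k) (Fin k) ℂ)) ((t : ℂ) • C) :=
    (Commute.one_left _).smul_left _
  rw [cMatExp, cMatExp, smul_add, smul_smul, Matrix.exp_add_of_commute _ _ hcomm,
    smul_one_eq_diagonal, exp_diagonal, Pi.exp_def, ← Complex.exp_eq_exp_ℂ,
    ← smul_one_eq_diagonal, smul_one_mul]

lemma norm_exp_smul_nilpBlock_apply_le (k : ℕ) {T : ℝ} (hT : 0 < T) (i j : Fin k) :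
    ‖exp ((T : ℂ) • nilpBlock k) i j‖ ≤ T ^ ((j : ℝ) - i) := by
  rw [exp_smul_nilpBlock_apply]
  split_ifs with hij
  · rw [norm_div, norm_pow, Complex.norm_real, Real.norm_of_nonneg hT.le, Complex.norm_natCast,
      ← Nat.cast_sub hij, Real.rpow_natCast]
    exact div_le_self (by positivity) (mod_cast Nat.one_le_iff_ne_zero.2 (factorial_ne_zero _))
  · rw [norm_zero]
    positivity

lemma scaleD_inv_of_pos (k : ℕ) {T : ℝ} (hT : 0 < T) :
    (scaleD k T)⁻¹ = diagonal fun a : Fin k => ((T ^ (-((k : ℝ) - (a : ℕ) - 1/2)) : ℝ) : ℂ) := by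
  refine inv_eq_left_inv ?_
  rw [scaleD, diagonal_mul_diagonal, ← diagonal_one]
  congr 1
  funext a
  rw [← Complex.ofReal_mul, ← Real.rpow_add hT, neg_add_cancel, Real.rpow_zero, Complex.ofReal_one]

lemma norm_scaleD_inv_mul_cMatExp_apply_le {k : ℕ} {lam : ℂ} (hlam : lam.re = 0) {T : ℝ}
    (hT : 0 < T) (i j : Fin k) :
    ‖((scaleD k T)⁻¹ * cMatExp (lam • (1 : Matrix (Fin k) (Fin k) ℂ) + nilpBlock k) T) i j‖
      ≤ T ^ (-((k : ℝ) - (j : ℕ) - 1/2)) := by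
  have hunit : ‖Complex.exp (T * lam)‖ = 1 := by
    rw [Complex.norm_exp, Complex.re_ofReal_mul, hlam, mul_zero, Real.exp_zero]
  rw [scaleD_inv_of_pos k hT, cMatExp_smul_one_add, diagonal_mul, Matrix.smul_apply, smul_eq_mul,
    norm_mul, norm_mul, hunit, one_mul, Complex.norm_real, Real.norm_of_nonneg (by positivity)]
  calc T ^ (-((k : ℝ) - (i : ℕ) - 1/2)) * ‖cMatExp (nilpBlock k) T i j‖
      ≤ T ^ (-((k : ℝ) - (i : ℕ) - 1/2)) * T ^ ((j : ℝ) - i) := by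
        gcongr
        exact norm_exp_smul_nilpBlock_apply_le k hT i j
    _ = T ^ (-((k : ℝ) - (j : ℕ) - 1/2)) := by
        rw [← Real.rpow_add hT]
        ring_nf

theorem stmt13_general (k : ℕ) (lam : ℂ) (hlam : lam.re = 0)
    (J : Matrix (Fin k) (Fin k) ℂ) (hJ : J = lam • (1 : Matrix (Fin k) (Fin k) ℂ) + nilpBlock k) :
    ∀ i j, Filter.Tendsto (fun T : ℝ => ((scaleD k T)⁻¹ * cMatExp J T) i j)
      Filter.atTop (nhds 0) := by
  intro i j
  subst hJ
  have hexp : 0 < (k : ℝ) - (j : ℕ) - 1/2 := by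
    have : ((j : ℕ) : ℝ) + 1 ≤ k := mod_cast j.isLt
    linarith
  refine squeeze_zero_norm' ?_ (tendsto_rpow_neg_atTop hexp)
  filter_upwards [eventually_gt_atTop 0] with T hT
  exact norm_scaleD_inv_mul_cMatExp_apply_le hlam hT i j

theorem stmt13 (k : ℕ) (hk : 1 ≤ k) (lam : ℂ) (hlam : lam.re = 0)
    (J : Matrix (Fin k) (Fin k) ℂ) (hJ : J = lam • (1 : Matrix (Fin k) (Fin k) ℂ) + nilpBlock k) :
    ∀ i j, Filter.Tendsto (fun T : ℝ => ((scaleD k T)⁻¹ * cMatExp J T) i j)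
      Filter.atTop (nhds 0) :=
  stmt13_general k lam hlam J hJ
end

section
/- Let A ∈ ℝ^{n×n}, let Q ∈ ℂ^{n×n} be invertible, let D : (0,∞) → ℂ^{n×n} take invertible values, and let W₁,…,W_n ∈ ℂ^{n×n} be Hermitian matrices; write W_∞(p) = ∑_{i=1}^n p_i W_i. Assume: (i) for every p ∈ Δ, D(T)⁻¹ Q⁻¹ W̃(p;T) Q^{−*} D(T)^{−*} → W_∞(p) entrywise as T → ∞; (ii) W_∞(p) is positive definite whenever all entries of p ∈ Δ are positive; (iii) there is a unique p^∞ minimizing −log det W_∞(p) over {p ∈ Δ : W_∞(p) positive definite}. Then for every T > 0 the set of minimizers of −log det W̃(p;T) over {p ∈ Δ : W̃(p;T) positive definite} is nonempty, and for any choice of minimizers p^T one has p^T → p^∞ as T → ∞. -/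
open Matrix Filter intervalIntegral
open scoped ComplexOrder

/-- Membership in the standard simplex Δ ⊆ ℝⁿ. -/
def inSimplex {n : ℕ} (p : Fin n → ℝ) : Prop :=
  (∀ i, 0 ≤ p i) ∧ ∑ i, p i = 1


/-!
For fixed `T`, `p ↦ det W̃(p;T)` is continuous on the compact simplex and positive at its
barycentre, so it attains a positive maximum there; on the simplex every `W̃(p;T)` is positive
semidefinite, so maximizers of `det` are exactly the minimizers of `-log det` over the positive
definite points.

For the limit, `p ↦ W̃(p;T)` is linear, so (i) at the vertices of Δ upgrades to convergence of
`N_T W̃(p;T) N_Tᴴ`, `N_T = D(T)⁻¹Q⁻¹`, jointly as `T → ∞` and `p → x`. Its determinant is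
`|det N_T|² det W̃(p;T)`, so `p^T` maximizes it as well, and at any cluster point `x` of `p^T`
the limit shows that `x` maximizes `det W_∞` on Δ. As a limit of positive semidefinite matrices
whose determinant is at least `det W_∞(p^∞) > 0`, `W_∞(x)` is positive definite, so `x = p^∞` by
uniqueness, and compactness of Δ gives convergence.
-/

open Matrix Filter Topology Set Real

section MatrixLemmas

variable {m : Type*} [Fintype m]

theorem Matrix.isClosed_setOf_posSemidef {𝕜 : Type*} [RCLike 𝕜] :
    IsClosed {M : Matrix m m 𝕜 | M.PosSemidef} := by
  simp only [posSemidef_iff_dotProduct_mulVec, ofPred_and, ofPred_forall]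
  exact (isClosed_eq continuous_id.matrix_conjTranspose continuous_id).inter
    (isClosed_iInter fun x => isClosed_le continuous_const
      (continuous_const.dotProduct (continuous_id.matrix_mulVec continuous_const)))

theorem Matrix.PosSemidef.map_ofReal [DecidableEq m] {M : Matrix m m ℝ} (hM : M.PosSemidef) :
    (M.map Complex.ofReal).PosSemidef := by
  obtain ⟨B, rfl⟩ : ∃ B : Matrix m m ℝ, M = Bᴴ * B := by
    open scoped MatrixOrder in exact CStarAlgebra.nonneg_iff_eq_star_mul_self.mp hM.nonneg
  have h : (Bᴴ * B).map Complex.ofReal = (B.map Complex.ofReal)ᴴ * B.map Complex.ofReal := by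
    ext i j
    simp [Matrix.mul_apply]
  rw [h]
  exact posSemidef_conjTranspose_mul_self _

theorem Matrix.re_det_mul_map_ofReal_mul_conjTranspose [DecidableEq m] (N : Matrix m m ℂ)
    (M : Matrix m m ℝ) :
    (N * M.map Complex.ofReal * Nᴴ).det.re = Complex.normSq N.det * M.det := by
  rw [det_mul, det_mul, det_conjTranspose, mul_right_comm, Complex.star_def, Complex.mul_conj,
    show (M.map Complex.ofReal).det = M.det from (Complex.ofRealHom.map_det M).symm,
    ← Complex.ofReal_mul, Complex.ofReal_re]

theorem Matrix.PosSemidef.posDef_iff_det_pos [DecidableEq m] {M : Matrix m m ℝ}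
    (hM : M.PosSemidef) : M.PosDef ↔ 0 < M.det :=
  hM.posDef_iff_det_ne_zero.trans hM.det_nonneg.lt_iff_ne'.symm

theorem Matrix.PosSemidef.posDef_iff_re_det_pos [DecidableEq m] {M : Matrix m m ℂ}
    (hM : M.PosSemidef) : M.PosDef ↔ 0 < M.det.re := by
  obtain ⟨hre, him⟩ := Complex.nonneg_iff.1 hM.det_nonneg
  rw [hM.posDef_iff_det_ne_zero, hre.lt_iff_ne', ne_eq, ne_eq, Complex.ext_iff]
  simp [← him]

end MatrixLemmas

section LogDet

variable {X : Type*} {S : Set X} {P : X → Prop} {d : X → ℝ} {x : X}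

theorem isMaxOn_of_isMinOn_neg_log (hP : ∀ q ∈ S, 0 < d q → P q) (hx : 0 < d x)
    (hmin : IsMinOn (fun q => -log (d q)) {q | q ∈ S ∧ P q} x) : IsMaxOn d S x := by
  intro q hq
  rcases le_or_gt (d q) 0 with hq0 | hq0
  · exact hq0.trans hx.le
  · exact (log_le_log_iff hq0 hx).1 (neg_le_neg_iff.1 (hmin ⟨hq, hP q hq hq0⟩))

theorem isMinOn_neg_log_of_isMaxOn (hP : ∀ q ∈ S, P q → 0 < d q) (hmax : IsMaxOn d S x) :
    IsMinOn (fun q => -log (d q)) {q | q ∈ S ∧ P q} x :=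
  fun q ⟨hq, hPq⟩ => neg_le_neg (log_le_log (hP q hq hPq) (hmax hq))

end LogDet

theorem IsCompact.tendsto_of_isMaxOn {ι X : Type*} [TopologicalSpace X] {S : Set X}
    (hS : IsCompact S) {l : Filter ι} {F : ι → X → ℝ} {f : X → ℝ} {p : ι → X} {x₀ : X}
    (hp : ∀ᶠ i in l, p i ∈ S ∧ IsMaxOn (F i) S (p i))
    (hF : ∀ x ∈ S, Tendsto (fun z : ι × X => F z.1 z.2) (l ×ˢ 𝓝 x) (𝓝 (f x)))
    (huniq : ∀ x ∈ S, IsMaxOn f S x → x = x₀) : Tendsto p l (𝓝 x₀) := by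
  refine hS.tendsto_nhds_of_unique_mapClusterPt (hp.mono fun i hi => hi.1)
    fun x hxS hx => huniq x hxS fun q hq => ?_
  obtain ⟨U, hUl, hpx⟩ := mapClusterPt_iff_ultrafilter.1 hx
  have hFq : Tendsto (fun i => F i q) U (𝓝 (f q)) :=
    (hF q hq).comp ((tendsto_id.mono_right hUl).prodMk tendsto_const_nhds)
  have hFp : Tendsto (fun i => F i (p i)) U (𝓝 (f x)) :=
    (hF x hxS).comp ((tendsto_id.mono_right hUl).prodMk hpx)
  exact le_of_tendsto_of_tendsto hFq hFp ((hp.filter_mono hUl).mono fun i hi => hi.2 hq)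

theorem dotProduct_mulVec_intervalIntegral {m : Type*} [Fintype m] {f : ℝ → Matrix m m ℝ}
    (hf : Continuous f) (a b : ℝ) (x : m → ℝ) :
    x ⬝ᵥ (fun i j => ∫ t in a..b, f t i j) *ᵥ x = ∫ t in a..b, x ⬝ᵥ f t *ᵥ x := by
  have hc : ∀ i j, Continuous fun t => f t i j := hf.matrix_elem
  simp only [dotProduct, mulVec]
  rw [intervalIntegral.integral_finsetSum (f := fun i t => x i * ∑ j, f t i j * x j) fun i _ =>
    (continuous_const.mul (continuous_finsetSum _ fun j _ =>
      (hc i j).mul continuous_const)).intervalIntegrable a b]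
  refine Finset.sum_congr rfl fun i _ => ?_
  rw [intervalIntegral.integral_const_mul, intervalIntegral.integral_finsetSum
    (f := fun j t => f t i j * x j) fun j _ =>
      ((hc i j).mul continuous_const).intervalIntegrable a b]
  simp only [intervalIntegral.integral_mul_const]

section Gramian

variable {n : ℕ} (A : Matrix (Fin n) (Fin n) ℝ)

theorem continuous_matExp : Continuous (matExp A) := by
  open scoped Norms.Operator in
  exact NormedSpace.exp_continuous.comp (continuous_id.smul continuous_const)

theorem continuous_gramian_integrand (B : Matrix (Fin n) (Fin n) ℝ) :
    Continuous fun t => matExp A t * B * (matExp A t)ᵀ :=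
  ((continuous_matExp A).matrix_mul continuous_const).matrix_mul
    (continuous_matExp A).matrix_transpose

theorem dotProduct_gramian_mulVec (B : Matrix (Fin n) (Fin n) ℝ) (T : ℝ) (x : Fin n → ℝ) :
    x ⬝ᵥ gramian A B T *ᵥ x = ∫ t in (0 : ℝ)..T, x ⬝ᵥ (matExp A t * B * (matExp A t)ᵀ) *ᵥ x :=
  dotProduct_mulVec_intervalIntegral (continuous_gramian_integrand A B) 0 T x

theorem gramian_transpose (B : Matrix (Fin n) (Fin n) ℝ) (T : ℝ) :
    (gramian A B T)ᵀ = gramian A Bᵀ T := by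
  ext i j
  simp only [transpose_apply, gramian]
  congr 1
  ext t
  rw [← transpose_apply (matExp A t * Bᵀ * (matExp A t)ᵀ), transpose_mul, transpose_mul,
    transpose_transpose, transpose_transpose, Matrix.mul_assoc]

theorem isHermitian_gramian {B : Matrix (Fin n) (Fin n) ℝ} (hB : B.IsHermitian) (T : ℝ) :
    (gramian A B T).IsHermitian := by
  rw [IsHermitian, conjTranspose_eq_transpose_of_trivial] at hB ⊢
  rw [gramian_transpose, hB]

theorem gramian_posSemidef {B : Matrix (Fin n) (Fin n) ℝ} (hB : B.PosSemidef) {T : ℝ}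
    (hT : 0 ≤ T) : (gramian A B T).PosSemidef := by
  refine .of_dotProduct_mulVec_nonneg (isHermitian_gramian A hB.isHermitian T) fun x => ?_
  rw [star_trivial, dotProduct_gramian_mulVec]
  refine intervalIntegral.integral_nonneg hT fun t _ => ?_
  simpa [conjTranspose_eq_transpose_of_trivial] using
    (hB.mul_mul_conjTranspose_same (matExp A t)).dotProduct_mulVec_nonneg x

theorem gramian_posDef {B : Matrix (Fin n) (Fin n) ℝ} (hB : B.PosDef) {T : ℝ} (hT : 0 < T) :
    (gramian A B T).PosDef := by
  refine .of_dotProduct_mulVec_pos (isHermitian_gramian A hB.isHermitian T) fun x hx => ?_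
  rw [star_trivial, dotProduct_gramian_mulVec]
  refine intervalIntegral.intervalIntegral_pos_of_pos
    ((continuous_const.dotProduct ((continuous_gramian_integrand A B).matrix_mulVec
      continuous_const)).intervalIntegrable 0 T) (fun t => ?_) hT
  have hE : Function.Injective (matExp A t).vecMul :=
    vecMul_injective_iff_isUnit.2 (Matrix.isUnit_exp _)
  simpa [conjTranspose_eq_transpose_of_trivial] using
    (hB.mul_mul_conjTranspose_same hE).dotProduct_mulVec_pos hx

theorem gramian_sum_smul {ι : Type*} (s : Finset ι) (c : ι → ℝ)
    (B : ι → Matrix (Fin n) (Fin n) ℝ) (T : ℝ) :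
    gramian A (∑ k ∈ s, c k • B k) T = ∑ k ∈ s, c k • gramian A (B k) T := by
  ext i j
  simp only [gramian, Finset.mul_sum, Finset.sum_mul, mul_smul_comm, smul_mul_assoc,
    Matrix.sum_apply, Matrix.smul_apply, smul_eq_mul]
  rw [intervalIntegral.integral_finsetSum
    (f := fun k t => c k * (matExp A t * B k * (matExp A t)ᵀ) i j) fun k _ =>
    (((continuous_gramian_integrand A (B k)).matrix_elem i j).intervalIntegrable 0 T).const_mul _]
  simp only [intervalIntegral.integral_const_mul]

theorem gramian_diagonal (p : Fin n → ℝ) (T : ℝ) :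
    gramian A (diagonal p) T = ∑ k, p k • gramian A (diagonal (Pi.single k 1)) T := by
  rw [← gramian_sum_smul]
  congr 1
  ext i j
  by_cases h : i = j
  · subst h; simp [Matrix.sum_apply, Pi.single_apply]
  · simp [Matrix.sum_apply, h]

theorem continuous_gramian_diagonal (T : ℝ) :
    Continuous fun p : Fin n → ℝ => gramian A (diagonal p) T := by
  refine (continuous_finsetSum _ fun k _ => (continuous_apply k).smul continuous_const).congr
    fun p => (gramian_diagonal A p T).symm

end Gramian

section Minimizers

variable {n : ℕ} (A : Matrix (Fin n) (Fin n) ℝ)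

theorem posDef_gramian_diagonal_iff {p : Fin n → ℝ} (hp : p ∈ stdSimplex ℝ (Fin n)) {T : ℝ}
    (hT : 0 ≤ T) : (gramian A (diagonal p) T).PosDef ↔ 0 < (gramian A (diagonal p) T).det :=
  (gramian_posSemidef A (.diagonal hp.1) hT).posDef_iff_det_pos

theorem exists_isMinOn_neg_log_det_gramian [NeZero n] {T : ℝ} (hT : 0 < T) :
    ∃ p, (p ∈ stdSimplex ℝ (Fin n) ∧ (gramian A (diagonal p) T).PosDef) ∧
      IsMinOn (fun q => -log (gramian A (diagonal q) T).det)
        {q | q ∈ stdSimplex ℝ (Fin n) ∧ (gramian A (diagonal q) T).PosDef} p := by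
  have hn : (0 : ℝ) < n := Nat.cast_pos.2 (NeZero.pos n)
  have hu : (fun _ => (n : ℝ)⁻¹) ∈ stdSimplex ℝ (Fin n) :=
    ⟨fun _ => by positivity, by simp [hn.ne']⟩
  obtain ⟨p, hp, hmax⟩ := (isCompact_stdSimplex ℝ (Fin n)).exists_isMaxOn ⟨_, hu⟩
    (continuous_gramian_diagonal A T).matrix_det.continuousOn
  have hpos : 0 < (gramian A (diagonal p) T).det :=
    (gramian_posDef A (.diagonal fun _ => by positivity) hT).det_pos.trans_le (hmax hu)
  exact ⟨p, ⟨hp, (posDef_gramian_diagonal_iff A hp hT.le).2 hpos⟩,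
    isMinOn_neg_log_of_isMaxOn (fun _ _ hq => hq.det_pos) hmax⟩

theorem isMaxOn_det_gramian_of_isMinOn {T : ℝ} (hT : 0 ≤ T) {p : Fin n → ℝ}
    (hp : (gramian A (diagonal p) T).PosDef)
    (hmin : IsMinOn (fun q => -log (gramian A (diagonal q) T).det)
      {q | q ∈ stdSimplex ℝ (Fin n) ∧ (gramian A (diagonal q) T).PosDef} p) :
    IsMaxOn (fun q => (gramian A (diagonal q) T).det) (stdSimplex ℝ (Fin n)) p :=
  isMaxOn_of_isMinOn_neg_log (fun _ hq hpos => (posDef_gramian_diagonal_iff A hq hT).2 hpos)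
    hp.det_pos hmin

variable {N : ℝ → Matrix (Fin n) (Fin n) ℂ} {W : Fin n → Matrix (Fin n) (Fin n) ℂ}
  (hconv : ∀ p ∈ stdSimplex ℝ (Fin n), Tendsto
    (fun T => N T * (gramian A (diagonal p) T).map Complex.ofReal * (N T)ᴴ) atTop
    (𝓝 (∑ k, p k • W k)))
include hconv

theorem tendsto_mul_gramian_diagonal_mul_conjTranspose (x : Fin n → ℝ) :
    Tendsto (fun z : ℝ × (Fin n → ℝ) =>
        N z.1 * (gramian A (diagonal z.2) z.1).map Complex.ofReal * (N z.1)ᴴ)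
      (atTop ×ˢ 𝓝 x) (𝓝 (∑ k, x k • W k)) := by
  have hsingle : ∀ k, Tendsto (fun T =>
      N T * (gramian A (diagonal (Pi.single k 1)) T).map Complex.ofReal * (N T)ᴴ) atTop
      (𝓝 (W k)) := fun k => by
    simpa [Pi.single_apply, ite_smul] using hconv _ (single_mem_stdSimplex ℝ k)
  have hlin : ∀ (p : Fin n → ℝ) T,
      N T * (gramian A (diagonal p) T).map Complex.ofReal * (N T)ᴴ =
        ∑ k, p k • (N T * (gramian A (diagonal (Pi.single k 1)) T).map Complex.ofReal * (N T)ᴴ) := by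
    intro p T
    have hmap : (gramian A (diagonal p) T).map Complex.ofReal
        = ∑ k, p k • (gramian A (diagonal (Pi.single k 1)) T).map Complex.ofReal := by
      ext i j
      simp [gramian_diagonal A p T, Matrix.sum_apply]
    simp only [hmap, Finset.mul_sum, Finset.sum_mul, mul_smul_comm, smul_mul_assoc]
  refine (tendsto_finsetSum _ fun k _ => (((continuous_apply k).tendsto x).comp tendsto_snd).smul
    ((hsingle k).comp tendsto_fst)).congr fun z => (hlin z.2 z.1).symm

theorem posSemidef_sum_smul_of_tendsto {x : Fin n → ℝ} (hx : x ∈ stdSimplex ℝ (Fin n)) :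
    (∑ k, x k • W k).PosSemidef :=
  isClosed_setOf_posSemidef.mem_of_tendsto (hconv x hx) <| (eventually_ge_atTop 0).mono
    fun T hT => ((gramian_posSemidef A (.diagonal hx.1) hT).map_ofReal).mul_mul_conjTranspose_same
      (N T)

theorem eq_of_isMaxOn_re_det_sum_smul {pinf : Fin n → ℝ}
    (hfeas : pinf ∈ stdSimplex ℝ (Fin n) ∧ (∑ k, pinf k • W k).PosDef)
    (huniq : ∀ p, p ∈ stdSimplex ℝ (Fin n) ∧ (∑ k, p k • W k).PosDef →
      IsMinOn (fun q => -log (∑ k, q k • W k).det.re)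
        {q | q ∈ stdSimplex ℝ (Fin n) ∧ (∑ k, q k • W k).PosDef} p → p = pinf)
    {x : Fin n → ℝ} (hx : x ∈ stdSimplex ℝ (Fin n))
    (hmax : IsMaxOn (fun q => (∑ k, q k • W k).det.re) (stdSimplex ℝ (Fin n)) x) : x = pinf := by
  have hpos : 0 < (∑ k, x k • W k).det.re :=
    (hfeas.2.posSemidef.posDef_iff_re_det_pos.1 hfeas.2).trans_le (hmax hfeas.1)
  exact huniq x ⟨hx, (posSemidef_sum_smul_of_tendsto A hconv hx).posDef_iff_re_det_pos.2 hpos⟩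
    (isMinOn_neg_log_of_isMaxOn (fun _ _ hq => hq.posSemidef.posDef_iff_re_det_pos.1 hq) hmax)

theorem tendsto_of_isMinOn_neg_log_det_gramian {pinf : Fin n → ℝ}
    (hfeas : pinf ∈ stdSimplex ℝ (Fin n) ∧ (∑ k, pinf k • W k).PosDef)
    (huniq : ∀ p, p ∈ stdSimplex ℝ (Fin n) ∧ (∑ k, p k • W k).PosDef →
      IsMinOn (fun q => -log (∑ k, q k • W k).det.re)
        {q | q ∈ stdSimplex ℝ (Fin n) ∧ (∑ k, q k • W k).PosDef} p → p = pinf)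
    {pT : ℝ → Fin n → ℝ}
    (hpT : ∀ T > 0, (pT T ∈ stdSimplex ℝ (Fin n) ∧ (gramian A (diagonal (pT T)) T).PosDef) ∧
      IsMinOn (fun q => -log (gramian A (diagonal q) T).det)
        {q | q ∈ stdSimplex ℝ (Fin n) ∧ (gramian A (diagonal q) T).PosDef} (pT T)) :
    Tendsto pT atTop (𝓝 pinf) := by
  refine (isCompact_stdSimplex ℝ (Fin n)).tendsto_of_isMaxOn
    (F := fun T q => (N T * (gramian A (diagonal q) T).map Complex.ofReal * (N T)ᴴ).det.re)
    (f := fun x => (∑ k, x k • W k).det.re) ?_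
    (fun x _ => (Complex.continuous_re.comp continuous_id.matrix_det).continuousAt.tendsto.comp
      (tendsto_mul_gramian_diagonal_mul_conjTranspose A hconv x))
    (fun x hx => eq_of_isMaxOn_re_det_sum_smul A hconv hfeas huniq hx)
  filter_upwards [eventually_gt_atTop 0] with T hT
  refine ⟨(hpT T hT).1.1, fun q hq => ?_⟩
  simp only [mem_ofPred_eq, re_det_mul_map_ofReal_mul_conjTranspose]
  exact mul_le_mul_of_nonneg_left
    (isMaxOn_det_gramian_of_isMinOn A hT.le (hpT T hT).1.2 (hpT T hT).2 hq)
    (Complex.normSq_nonneg _)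

end Minimizers

theorem stmt18_general {n : ℕ} (A : Matrix (Fin n) (Fin n) ℝ)
    (Q : Matrix (Fin n) (Fin n) ℂ)
    (D : ℝ → Matrix (Fin n) (Fin n) ℂ)
    (W : Fin n → Matrix (Fin n) (Fin n) ℂ)
    -- (i) convergence of the scaled Gramian to `W_∞(p) = ∑ pᵢ Wᵢ`
    (hconv : ∀ p : Fin n → ℝ, inSimplex p → ∀ i j,
      Filter.Tendsto
        (fun T : ℝ =>
          ((D T)⁻¹ * Q⁻¹ * (gramian A (Matrix.diagonal p) T).map Complex.ofReal *
            (Q⁻¹)ᴴ * ((D T)⁻¹)ᴴ) i j)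
        Filter.atTop (nhds ((∑ k, p k • W k) i j)))
    -- (iii) unique infinite-horizon minimizer `p^∞`
    (pinf : Fin n → ℝ)
    (hfeas : inSimplex pinf ∧ (∑ k, pinf k • W k).PosDef)
    (huniq : ∀ p : Fin n → ℝ, inSimplex p ∧ (∑ k, p k • W k).PosDef →
      (∀ q : Fin n → ℝ, inSimplex q ∧ (∑ k, q k • W k).PosDef →
        -Real.log (∑ k, p k • W k).det.re ≤ -Real.log (∑ k, q k • W k).det.re) →
      p = pinf) :
    -- conclusion
    (∀ T : ℝ, 0 < T → ∃ p : Fin n → ℝ,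
      (inSimplex p ∧ (gramian A (Matrix.diagonal p) T).PosDef) ∧
      ∀ q : Fin n → ℝ, inSimplex q ∧ (gramian A (Matrix.diagonal q) T).PosDef →
        -Real.log (gramian A (Matrix.diagonal p) T).det
          ≤ -Real.log (gramian A (Matrix.diagonal q) T).det) ∧
    (∀ pT : ℝ → (Fin n → ℝ),
      (∀ T : ℝ, 0 < T →
        (inSimplex (pT T) ∧ (gramian A (Matrix.diagonal (pT T)) T).PosDef) ∧
        ∀ q : Fin n → ℝ, inSimplex q ∧ (gramian A (Matrix.diagonal q) T).PosDef →
          -Real.log (gramian A (Matrix.diagonal (pT T)) T).det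
            ≤ -Real.log (gramian A (Matrix.diagonal q) T).det) →
      Filter.Tendsto pT Filter.atTop (nhds pinf)) := by
  have : NeZero n := ⟨by rintro rfl; simpa [inSimplex] using hfeas.1.2⟩
  have hconv' : ∀ p ∈ stdSimplex ℝ (Fin n), Tendsto (fun T =>
      ((D T)⁻¹ * Q⁻¹) * (gramian A (diagonal p) T).map Complex.ofReal * ((D T)⁻¹ * Q⁻¹)ᴴ)
      atTop (𝓝 (∑ k, p k • W k)) := fun p hp =>
    tendsto_pi_nhds.2 fun i => tendsto_pi_nhds.2 fun j => by
      simpa only [conjTranspose_mul, Matrix.mul_assoc] using hconv p hp i j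
  exact ⟨fun T hT => exists_isMinOn_neg_log_det_gramian A hT,
    fun pT hpT => tendsto_of_isMinOn_neg_log_det_gramian A hconv' hfeas huniq hpT⟩

theorem stmt18 {n : ℕ} (A : Matrix (Fin n) (Fin n) ℝ)
    (Q : Matrix (Fin n) (Fin n) ℂ) (hQ : IsUnit Q)
    (D : ℝ → Matrix (Fin n) (Fin n) ℂ) (hD : ∀ T : ℝ, 0 < T → IsUnit (D T))
    (W : Fin n → Matrix (Fin n) (Fin n) ℂ) (hW : ∀ i, (W i).IsHermitian)
    -- (i) convergence of the scaled Gramian to `W_∞(p) = ∑ pᵢ Wᵢ`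
    (hconv : ∀ p : Fin n → ℝ, inSimplex p → ∀ i j,
      Filter.Tendsto
        (fun T : ℝ =>
          ((D T)⁻¹ * Q⁻¹ * (gramian A (Matrix.diagonal p) T).map Complex.ofReal *
            (Q⁻¹)ᴴ * ((D T)⁻¹)ᴴ) i j)
        Filter.atTop (nhds ((∑ k, p k • W k) i j)))
    -- (ii) positive definiteness of `W_∞(p)` for strictly positive `p ∈ Δ`
    (hpd : ∀ p : Fin n → ℝ, inSimplex p → (∀ i, 0 < p i) → (∑ k, p k • W k).PosDef)
    -- (iii) unique infinite-horizon minimizer `p^∞`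
    (pinf : Fin n → ℝ)
    (hfeas : inSimplex pinf ∧ (∑ k, pinf k • W k).PosDef)
    (hmin : ∀ q : Fin n → ℝ, inSimplex q ∧ (∑ k, q k • W k).PosDef →
      -Real.log (∑ k, pinf k • W k).det.re ≤ -Real.log (∑ k, q k • W k).det.re)
    (huniq : ∀ p : Fin n → ℝ, inSimplex p ∧ (∑ k, p k • W k).PosDef →
      (∀ q : Fin n → ℝ, inSimplex q ∧ (∑ k, q k • W k).PosDef →
        -Real.log (∑ k, p k • W k).det.re ≤ -Real.log (∑ k, q k • W k).det.re) →
      p = pinf) :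
    -- conclusion
    (∀ T : ℝ, 0 < T → ∃ p : Fin n → ℝ,
      (inSimplex p ∧ (gramian A (Matrix.diagonal p) T).PosDef) ∧
      ∀ q : Fin n → ℝ, inSimplex q ∧ (gramian A (Matrix.diagonal q) T).PosDef →
        -Real.log (gramian A (Matrix.diagonal p) T).det
          ≤ -Real.log (gramian A (Matrix.diagonal q) T).det) ∧
    (∀ pT : ℝ → (Fin n → ℝ),
      (∀ T : ℝ, 0 < T →
        (inSimplex (pT T) ∧ (gramian A (Matrix.diagonal (pT T)) T).PosDef) ∧
        ∀ q : Fin n → ℝ, inSimplex q ∧ (gramian A (Matrix.diagonal q) T).PosDef →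
          -Real.log (gramian A (Matrix.diagonal (pT T)) T).det
            ≤ -Real.log (gramian A (Matrix.diagonal q) T).det) →
      Filter.Tendsto pT Filter.atTop (nhds pinf)) :=
  stmt18_general A Q D W hconv pinf hfeas huniq
end
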